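/- arXiv:2101.02944 — 6 statements merged into one kernel-verified Lean document; each statement's English description precedes it below -/
import Mathlib

section
/- If L : E → ℝ is scale invariant, i.e. L(T_a(θ)) = L(θ) for every θ ∈ E and every a : Fin N₁ → ℝ with all aᵢ > 0, then the δ-L^p BN-sharpness is scale invariant: for every θ ∈ E, every δ > 0, every p > 0, and every a with all aᵢ > 0, one has ‖L‖_p^{δ,θ} = ‖L‖_p^{δ,T_a(θ)}. -/
open MeasureTheory Filter Set

noncomputable section

/-- `E = E₁ × F` with the product (ℓ²) inner product, where
`E₁ = Π i : Fin N₁, EuclideanSpace ℝ (Fin (n i))`. -/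
abbrev BNSpace {N₁ : ℕ} (n : Fin N₁ → ℕ) (F : Type*) [NormedAddCommGroup F] :=
  WithLp 2 ((PiLp 2 fun i => EuclideanSpace ℝ (Fin (n i))) × F)

variable {N₁ : ℕ} {n : Fin N₁ → ℕ} {F : Type*} [NormedAddCommGroup F]
  [InnerProductSpace ℝ F] [FiniteDimensional ℝ F]

/-- `φ(θ)`: the set of `v = (v₁, …, v_{N₁}, v*)` with `‖vᵢ‖ = ‖θᵢ‖` for all `i`
and `‖v*‖ = 1`. -/
def phi (θ : BNSpace n F) : Set (BNSpace n F) :=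
  {v | (∀ i, ‖v.ofLp.1 i‖ = ‖θ.ofLp.1 i‖) ∧ ‖v.ofLp.2‖ = 1}

/-- The δ-Lᵖ BN-sharpness
`‖L‖_p^{δ,θ} = sup_{v ∈ φ(θ)} δ^{-1/p} (∫_{-δ}^{δ} |(L(θ + t·v) − L(θ))/δ|^p dt)^{1/p}`. -/
def bnSharpness (L : BNSpace n F → ℝ) (p δ : ℝ) (θ : BNSpace n F) : ℝ :=
  sSup ((fun v => δ ^ (-(1 / p)) *
    (∫ t in (-δ)..δ, |(L (θ + t • v) - L θ) / δ| ^ p) ^ (1 / p)) '' phi θ)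

/-- The scale transformation `T_a(θ) = (a₁·θ₁, …, a_{N₁}·θ_{N₁}, θ*)`. -/
def Tscale (a : Fin N₁ → ℝ) (θ : BNSpace n F) : BNSpace n F :=
  WithLp.toLp 2 (WithLp.toLp 2 (fun i => a i • θ.ofLp.1 i), θ.ofLp.2)

/-! `T_a` is linear and maps `φ(θ)` onto `φ(T_a θ)`, since `‖aᵢ vᵢ‖ = ‖aᵢ θᵢ‖` exactly when
`‖vᵢ‖ = ‖θᵢ‖`. Substituting `v = T_a w` in the supremum defining the sharpness at `T_a θ` turns
each integrand `L(T_a θ + t T_a w) − L(T_a θ) = L(T_a(θ + t w)) − L(T_a θ)` into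
`L(θ + t w) − L(θ)` by scale invariance. -/

@[ext]
lemma WithLp.prod_ext {p : ENNReal} {α β : Type*} {x y : WithLp p (α × β)}
    (h₁ : x.fst = y.fst) (h₂ : x.snd = y.snd) : x = y :=
  WithLp.ofLp_injective p (Prod.ext h₁ h₂)

omit [FiniteDimensional ℝ F] in
theorem bnSharpness_map_eq (L : BNSpace n F → ℝ) (p δ : ℝ)
    (T : BNSpace n F →ₗ[ℝ] BNSpace n F) (hLT : ∀ x, L (T x) = L x) (θ : BNSpace n F)
    (hφ : T '' phi θ = phi (T θ)) :
    bnSharpness L p δ (T θ) = bnSharpness L p δ θ := by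
  unfold bnSharpness
  rw [← hφ, image_image]
  congr 2 with v
  simp only [← map_smul, ← map_add, hLT]

section Tscale

omit [InnerProductSpace ℝ F] [FiniteDimensional ℝ F]

variable (a b : Fin N₁ → ℝ) (θ v : BNSpace n F)

@[simp] lemma Tscale_fst (i : Fin N₁) : (Tscale a θ).fst i = a i • θ.fst i := rfl

@[simp] lemma Tscale_snd : (Tscale a θ).snd = θ.snd := rfl

lemma Tscale_Tscale : Tscale a (Tscale b θ) = Tscale (a * b) θ := by
  ext i <;> simp [mul_smul]

lemma Tscale_one : Tscale 1 θ = θ := by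
  ext i <;> simp

variable {a}

lemma Tscale_mem_phi_Tscale_iff (ha : ∀ i, a i ≠ 0) :
    Tscale a v ∈ phi (Tscale a θ) ↔ v ∈ phi θ := by
  simp [phi, norm_smul, ha]

lemma Tscale_Tscale_inv (ha : ∀ i, a i ≠ 0) : Tscale a (Tscale a⁻¹ v) = v := by
  rw [Tscale_Tscale, show a * a⁻¹ = 1 from funext fun i => mul_inv_cancel₀ (ha i), Tscale_one]

lemma image_Tscale_phi (ha : ∀ i, a i ≠ 0) : Tscale a '' phi θ = phi (Tscale a θ) := by
  refine Subset.antisymm ?_ fun v hv => ⟨Tscale a⁻¹ v, ?_, Tscale_Tscale_inv v ha⟩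
  · rintro _ ⟨v, hv, rfl⟩
    exact (Tscale_mem_phi_Tscale_iff θ v ha).mpr hv
  · rwa [← Tscale_mem_phi_Tscale_iff θ _ ha, Tscale_Tscale_inv _ ha]

end Tscale

omit [FiniteDimensional ℝ F] in
def TscaleLinearMap (a : Fin N₁ → ℝ) : BNSpace n F →ₗ[ℝ] BNSpace n F where
  toFun := Tscale a
  map_add' x y := by ext i <;> simp
  map_smul' c x := by ext i <;> simp [smul_comm _ c]

theorem bnSharpness_scale_invariant_general (L : BNSpace n F → ℝ)
    (hinv : ∀ (θ : BNSpace n F) (a : Fin N₁ → ℝ), (∀ i, 0 < a i) → L (Tscale a θ) = L θ) :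
    ∀ (θ : BNSpace n F) (δ p : ℝ), 0 < δ → 0 < p →
      ∀ a : Fin N₁ → ℝ, (∀ i, 0 < a i) →
        bnSharpness L p δ θ = bnSharpness L p δ (Tscale a θ) := by
  intro θ δ p _ _ a ha
  have ha₀ : ∀ i, a i ≠ 0 := fun i => (ha i).ne'
  exact (bnSharpness_map_eq L p δ (TscaleLinearMap a) (hinv · a ha) θ
    (image_Tscale_phi θ ha₀)).symm

/-- If `L` is scale invariant, then the δ-Lᵖ BN-sharpness is scale invariant. -/
theorem bnSharpness_scale_invariant (L : BNSpace n F → ℝ) (hL : Continuous L)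
    (hinv : ∀ (θ : BNSpace n F) (a : Fin N₁ → ℝ), (∀ i, 0 < a i) → L (Tscale a θ) = L θ) :
    ∀ (θ : BNSpace n F) (δ p : ℝ), 0 < δ → 0 < p →
      ∀ a : Fin N₁ → ℝ, (∀ i, 0 < a i) →
        bnSharpness L p δ θ = bnSharpness L p δ (Tscale a θ) :=
  bnSharpness_scale_invariant_general L hinv
end
end

section
/- Suppose L : E → ℝ is continuous and scale invariant, i.e. L(T_a(θ)) = L(θ) for every θ ∈ E and every a : Fin N₁ → ℝ with all aᵢ > 0. Then for every θ ∈ E, every v ∈ φ(θ), every δ > 0, every p > 0 and every such a, the directional Lᵖ integrals agree: ∫_{-δ}^{δ} |(L(θ + t·v) − L(θ))/δ|^p dt = ∫_{-δ}^{δ} |(L(T_a(θ) + t·T_a(v)) − L(T_a(θ)))/δ|^p dt. -/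
open MeasureTheory Filter Set

noncomputable section

variable {N₁ : ℕ} {n : Fin N₁ → ℕ} {F : Type*} [NormedAddCommGroup F]
  [InnerProductSpace ℝ F] [FiniteDimensional ℝ F]

omit [FiniteDimensional ℝ F] in
theorem Tscale_add_smul (a : Fin N₁ → ℝ) (x y : BNSpace n F) (t : ℝ) :
    Tscale a (x + t • y) = Tscale a x + t • Tscale a y := by
  refine WithLp.ofLp_injective 2 (Prod.ext (WithLp.ofLp_injective 2 (funext fun i => ?_)) rfl)
  simp [Tscale, smul_add, smul_comm t (a i)]

theorem directional_integral_scale_invariant_general (L : BNSpace n F → ℝ)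
    (hinv : ∀ (θ : BNSpace n F) (a : Fin N₁ → ℝ), (∀ i, 0 < a i) → L (Tscale a θ) = L θ) :
    ∀ (θ : BNSpace n F), ∀ v ∈ phi θ, ∀ δ p : ℝ, 0 < δ → 0 < p →
      ∀ a : Fin N₁ → ℝ, (∀ i, 0 < a i) →
        ∫ t in (-δ)..δ, |(L (θ + t • v) - L θ) / δ| ^ p =
          ∫ t in (-δ)..δ, |(L (Tscale a θ + t • Tscale a v) - L (Tscale a θ)) / δ| ^ p := by
  intro θ v _ δ p _ _ a ha
  refine intervalIntegral.integral_congr fun t _ => ?_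
  simp only [← Tscale_add_smul, hinv _ a ha]

/-- If `L` is continuous and scale invariant, the directional Lᵖ integrals in the
direction `v` at `θ`, and in the direction `T_a(v)` at `T_a(θ)`, agree. -/
theorem directional_integral_scale_invariant (L : BNSpace n F → ℝ) (hL : Continuous L)
    (hinv : ∀ (θ : BNSpace n F) (a : Fin N₁ → ℝ), (∀ i, 0 < a i) → L (Tscale a θ) = L θ) :
    ∀ (θ : BNSpace n F), ∀ v ∈ phi θ, ∀ δ p : ℝ, 0 < δ → 0 < p →
      ∀ a : Fin N₁ → ℝ, (∀ i, 0 < a i) →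
        ∫ t in (-δ)..δ, |(L (θ + t • v) - L θ) / δ| ^ p =
          ∫ t in (-δ)..δ, |(L (Tscale a θ + t • Tscale a v) - L (Tscale a θ)) / δ| ^ p :=
  directional_integral_scale_invariant_general L hinv
end
end

section
/- δ-sharpness is not scale invariant for scale-invariant functions: there exist a dimension n ≥ 2, a nonnegative function L : EuclideanSpace ℝ n → ℝ that is continuous on {x : x ≠ 0} and satisfies L(c • x) = L(x) for every c > 0 and every x ≠ 0, together with a point θ ≠ 0, a scalar c > 0 and a radius δ > 0, such that sup_{θ' ∈ closedBall(θ, δ)} (L(θ') − L(θ)) ≠ sup_{θ' ∈ closedBall(c • θ, δ)} (L(θ') − L(c • θ)). -/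
/-!
The cosine distance `L x = 1 - ⟪u, x⟫ / ‖x‖` to a unit vector `u` depends only on the direction
of `x`. A ball of radius `2` around `u` reaches `-u`, where `L = 2`, so the sharpness at `u` is at
least `2`; a ball of radius `2` around `3 • u` stays in the half-space `⟪u, x⟫ ≥ 0`, where `L ≤ 1`,
so the sharpness at `3 • u` is at most `1`.
-/

open Metric

section Sharpness

variable {α : Type*} [PseudoMetricSpace α] {L : α → ℝ} {δ : ℝ} {θ θ' : α}

noncomputable def sharpness (L : α → ℝ) (δ : ℝ) (θ : α) : ℝ :=
  sSup ((fun θ' => L θ' - L θ) '' closedBall θ δ)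

lemma sub_le_sharpness (hL : BddAbove (L '' closedBall θ δ)) (hθ' : θ' ∈ closedBall θ δ) :
    L θ' - L θ ≤ sharpness L δ θ := by
  obtain ⟨M, hM⟩ := hL
  refine le_csSup ⟨M - L θ, ?_⟩ ⟨θ', hθ', rfl⟩
  rintro _ ⟨x, hx, rfl⟩
  exact sub_le_sub_right (hM ⟨x, hx, rfl⟩) _

lemma sharpness_le {b : ℝ} (hδ : 0 ≤ δ) (h : ∀ θ' ∈ closedBall θ δ, L θ' - L θ ≤ b) :
    sharpness L δ θ ≤ b :=
  csSup_le ((nonempty_closedBall.2 hδ).image _) (by rintro _ ⟨x, hx, rfl⟩; exact h x hx)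

end Sharpness

section CosineDistance

variable {E : Type*} [NormedAddCommGroup E] [InnerProductSpace ℝ E] {u x : E} {c δ : ℝ}

noncomputable def cosineDistance (u x : E) : ℝ := 1 - inner ℝ u x / ‖x‖

lemma abs_inner_div_norm_le_one (hu : ‖u‖ ≤ 1) (x : E) : |inner ℝ u x / ‖x‖| ≤ 1 := by
  rw [abs_div, abs_norm]
  refine div_le_one_of_le₀ ((abs_real_inner_le_norm u x).trans ?_) (norm_nonneg x)
  exact mul_le_of_le_one_left (norm_nonneg x) hu

lemma cosineDistance_nonneg (hu : ‖u‖ ≤ 1) (x : E) : 0 ≤ cosineDistance u x :=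
  sub_nonneg.2 (abs_le.1 (abs_inner_div_norm_le_one hu x)).2

lemma cosineDistance_le_two (hu : ‖u‖ ≤ 1) (x : E) : cosineDistance u x ≤ 2 := by
  have := (abs_le.1 (abs_inner_div_norm_le_one hu x)).1
  unfold cosineDistance
  linarith

lemma cosineDistance_le_one_of_inner_nonneg (h : 0 ≤ inner ℝ u x) : cosineDistance u x ≤ 1 :=
  sub_le_self _ (div_nonneg h (norm_nonneg x))

lemma continuousOn_cosineDistance (u : E) : ContinuousOn (cosineDistance u) {x | x ≠ 0} :=
  continuousOn_const.sub <| (continuous_const.inner continuous_id).continuousOn.div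
    continuous_norm.continuousOn fun _ hx => norm_ne_zero_iff.2 hx

lemma cosineDistance_smul_of_pos (hc : 0 < c) (u x : E) :
    cosineDistance u (c • x) = cosineDistance u x := by
  rw [cosineDistance, cosineDistance, inner_smul_right, norm_smul, Real.norm_of_nonneg hc.le,
    mul_div_mul_left _ _ hc.ne']

lemma cosineDistance_self (hu : ‖u‖ = 1) : cosineDistance u u = 0 := by
  simp [cosineDistance, hu]

lemma cosineDistance_neg_self (hu : ‖u‖ = 1) : cosineDistance u (-u) = 2 := by
  rw [cosineDistance, inner_neg_right, norm_neg, real_inner_self_eq_norm_sq, hu]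
  norm_num

lemma inner_nonneg_of_mem_closedBall_smul (hu : ‖u‖ = 1) (hδc : δ ≤ c)
    (hx : x ∈ closedBall (c • u) δ) : 0 ≤ inner ℝ u x := by
  have hcenter : inner ℝ u (c • u) = c := by
    rw [inner_smul_right, real_inner_self_eq_norm_sq, hu, one_pow, mul_one]
  have hsplit : inner ℝ u x = inner ℝ u (c • u) + inner ℝ u (x - c • u) := by
    rw [← inner_add_right, add_sub_cancel]
  have hdev : -δ ≤ inner ℝ u (x - c • u) := by
    have h := neg_le_of_abs_le (abs_real_inner_le_norm u (x - c • u))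
    rw [hu, one_mul, ← dist_eq_norm] at h
    linarith [mem_closedBall.1 hx]
  linarith

lemma two_le_sharpness_cosineDistance (hu : ‖u‖ = 1) (hδ : 2 ≤ δ) :
    2 ≤ sharpness (cosineDistance u) δ u := by
  have hbdd : BddAbove (cosineDistance u '' closedBall u δ) :=
    ⟨2, by rintro _ ⟨x, -, rfl⟩; exact cosineDistance_le_two hu.le x⟩
  have hneg : -u ∈ closedBall u δ := by
    rw [mem_closedBall, dist_eq_norm, ← neg_add', norm_neg, ← two_smul ℝ, norm_smul, hu]
    norm_num [hδ]
  simpa [cosineDistance_neg_self hu, cosineDistance_self hu] using sub_le_sharpness hbdd hneg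

lemma sharpness_cosineDistance_smul_le_one (hu : ‖u‖ = 1) (hδ : 0 ≤ δ) (hδc : δ ≤ c) :
    sharpness (cosineDistance u) δ (c • u) ≤ 1 :=
  sharpness_le hδ fun _ hx => (sub_le_self _ (cosineDistance_nonneg hu.le _)).trans
    (cosineDistance_le_one_of_inner_nonneg (inner_nonneg_of_mem_closedBall_smul hu hδc hx))

end CosineDistance

/-- δ-sharpness is not scale invariant for scale-invariant functions: there exist a
dimension `n ≥ 2`, a nonnegative function `L` on `EuclideanSpace ℝ (Fin n)` that is
continuous away from `0` and scale invariant (`L (c • x) = L x` for `c > 0`, `x ≠ 0`),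
a point `θ ≠ 0`, a scalar `c > 0` and a radius `δ > 0` such that the δ-sharpness
`sup_{θ' ∈ closedBall(θ, δ)} (L θ' − L θ)` differs between `θ` and `c • θ`. -/
theorem delta_sharpness_not_scale_invariant :
    ∃ (n : ℕ), 2 ≤ n ∧ ∃ (L : EuclideanSpace ℝ (Fin n) → ℝ),
      (∀ x, 0 ≤ L x) ∧
      ContinuousOn L {x : EuclideanSpace ℝ (Fin n) | x ≠ 0} ∧
      (∀ c : ℝ, 0 < c → ∀ x : EuclideanSpace ℝ (Fin n), x ≠ 0 → L (c • x) = L x) ∧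
      ∃ (θ : EuclideanSpace ℝ (Fin n)), θ ≠ 0 ∧ ∃ (c : ℝ), 0 < c ∧ ∃ (δ : ℝ), 0 < δ ∧
        sSup ((fun θ' => L θ' - L θ) '' Metric.closedBall θ δ) ≠
          sSup ((fun θ' => L θ' - L (c • θ)) '' Metric.closedBall (c • θ) δ) := by
  set u : EuclideanSpace ℝ (Fin 2) := EuclideanSpace.single 0 1
  have hu : ‖u‖ = 1 := by simp [u]
  refine ⟨2, le_rfl, cosineDistance u, cosineDistance_nonneg hu.le,
    continuousOn_cosineDistance u, fun c hc x _ => cosineDistance_smul_of_pos hc u x,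
    u, norm_ne_zero_iff.1 (by simp [hu]), 3, by norm_num, 2, by norm_num, ?_⟩
  have hfar := sharpness_cosineDistance_smul_le_one (c := 3) hu zero_le_two (by norm_num)
  have hnear := two_le_sharpness_cosineDistance hu le_rfl
  exact (hfar.trans_lt (by norm_num) |>.trans_le hnear).ne'
end

section
/- Let E be a finite-dimensional real inner product space, L : E → ℝ continuous and Fréchet differentiable at θ ∈ E, v ∈ E a fixed vector, and p ≥ 1 a real number. Then lim_{δ→0⁺} δ^{-1/p} (∫_{-δ}^{δ} |(L(θ + t·v) − L(θ))/δ|^p dt)^{1/p} = (2/(p+1))^{1/p} · |⟨∇L(θ), v⟩|, where ∇L(θ) denotes the gradient of L at θ. -/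
/-!
Along the line `t ↦ θ + t • v`, `L` restricts to a real function `g` with
`g'(0) = ⟪∇L(θ), v⟫`. The substitution `t = δ s` turns the δ-quantity into
`(∫_{-1}^{1} |(g(δ s) - g(0)) / δ|^p ds)^{1/p}`. The integrand tends to `|g'(0) s|^p` and is
uniformly bounded for small `δ` because `g(t) - g(0) = O(t)`, so dominated convergence gives
the limit `(|g'(0)|^p · 2/(p+1))^{1/p}`.
-/

open MeasureTheory Filter Set RealInnerProductSpace
open scoped Topology

theorem integral_abs_rpow_neg_one_one {p : ℝ} (hp : -1 < p) :
    ∫ s in (-1 : ℝ)..1, |s| ^ p = 2 / (p + 1) := by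
  have habs : EqOn (fun s : ℝ => s ^ p) (fun s => |s| ^ p) (uIcc 0 1) := fun s hs => by
    rw [uIcc_of_le zero_le_one] at hs
    simp only [abs_of_nonneg hs.1]
  have h01 : ∫ s in (0 : ℝ)..1, |s| ^ p = 1 / (p + 1) := by
    rw [← intervalIntegral.integral_congr habs, integral_rpow (Or.inl hp), Real.one_rpow,
      Real.zero_rpow (by linarith)]
    ring
  have hint : IntervalIntegrable (fun s : ℝ => |s| ^ p) volume 0 1 :=
    (intervalIntegral.intervalIntegrable_rpow' hp).congr (habs.mono uIoc_subset_uIcc)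
  have hneg : IntervalIntegrable (fun s : ℝ => |s| ^ p) volume (-1) 0 := by
    simpa using ((IntervalIntegrable.iff_comp_neg).mp hint).symm
  rw [← intervalIntegral.integral_add_adjacent_intervals hneg hint, ← neg_zero,
    ← intervalIntegral.integral_comp_neg]
  simp only [abs_neg, neg_zero, h01]
  ring

theorem rpow_neg_mul_integral_rpow_eq {f : ℝ → ℝ} (hf : ∀ t, 0 ≤ f t) {δ : ℝ} (hδ : 0 < δ)
    (q : ℝ) : δ ^ (-q) * (∫ t in (-δ)..δ, f t) ^ q = (∫ s in (-1 : ℝ)..1, f (δ * s)) ^ q := by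
  have hscale : ∫ t in (-δ)..δ, f t = δ * ∫ s in (-1 : ℝ)..1, f (δ * s) := by
    rw [intervalIntegral.integral_comp_mul_left f hδ.ne', mul_neg_one, mul_one, smul_eq_mul,
      mul_inv_cancel_left₀ hδ.ne']
  have hI : 0 ≤ ∫ s in (-1 : ℝ)..1, f (δ * s) :=
    intervalIntegral.integral_nonneg (by norm_num) fun s _ => hf _
  rw [hscale, Real.mul_rpow hδ.le hI, ← mul_assoc, ← Real.rpow_add hδ, neg_add_cancel,
    Real.rpow_zero, one_mul]

section DifferenceQuotient

variable {g : ℝ → ℝ} {c : ℝ}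

theorem HasDerivAt.tendsto_slope_comp_mul_const (hg : HasDerivAt g c 0) (s : ℝ) :
    Tendsto (fun δ => (g (δ * s) - g 0) / δ) (𝓝[≠] 0) (𝓝 (c * s)) := by
  have hgs : HasDerivAt (fun δ => g (δ * s)) (c * s) 0 := by
    simpa using (zero_mul s ▸ hg).comp (0 : ℝ) (hasDerivAt_mul_const s)
  exact (hasDerivAt_iff_tendsto_slope.mp hgs).congr fun δ => by simp [slope_def_field]

theorem HasDerivAt.exists_eventually_abs_sub_div_le (hg : HasDerivAt g c 0) :
    ∃ C, ∀ᶠ δ in 𝓝[>] 0, ∀ s, |s| ≤ 1 → |(g (δ * s) - g 0) / δ| ≤ C := by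
  obtain ⟨C, hC⟩ := hg.isBigO_sub.bound
  obtain ⟨r, hr, hball⟩ := Metric.eventually_nhds_iff.mp hC
  refine ⟨|C|, ?_⟩
  filter_upwards [Ioo_mem_nhdsGT hr] with δ ⟨hδ, hδr⟩ s hs
  have hδs : |δ * s| ≤ δ := by
    rw [abs_mul, abs_of_pos hδ]
    exact mul_le_of_le_one_right hδ.le hs
  have hlin : |g (δ * s) - g 0| ≤ C * |δ * s| := by
    simpa using hball (show dist (δ * s) 0 < r by rw [Real.dist_0_eq_abs]; linarith)
  rw [abs_div, abs_of_pos hδ, div_le_iff₀ hδ]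
  exact hlin.trans (mul_le_mul (le_abs_self C) hδs (abs_nonneg _) (abs_nonneg C))

variable {p : ℝ}

theorem tendsto_integral_abs_sub_div_rpow (hgc : Continuous g) (hg : HasDerivAt g c 0)
    (hp : 0 < p) :
    Tendsto (fun δ => ∫ s in (-1 : ℝ)..1, |(g (δ * s) - g 0) / δ| ^ p) (𝓝[>] 0)
      (𝓝 (|c| ^ p * (2 / (p + 1)))) := by
  obtain ⟨C, hC⟩ := hg.exists_eventually_abs_sub_div_le
  have hlim : ∫ s in (-1 : ℝ)..1, |c * s| ^ p = |c| ^ p * (2 / (p + 1)) := by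
    simp_rw [abs_mul, Real.mul_rpow (abs_nonneg c) (abs_nonneg _)]
    rw [intervalIntegral.integral_const_mul, integral_abs_rpow_neg_one_one (by linarith)]
  rw [← hlim]
  refine intervalIntegral.tendsto_integral_filter_of_dominated_convergence (fun _ => C ^ p)
    ?meas ?bound intervalIntegrable_const ?lim
  case meas =>
    refine Eventually.of_forall fun δ => Continuous.aestronglyMeasurable ?_
    fun_prop (disch := exact hp.le)
  case bound =>
    filter_upwards [hC] with δ hδ
    refine Eventually.of_forall fun s hs => ?_
    have hs1 : |s| ≤ 1 := by
      rw [uIoc_of_le (by norm_num)] at hs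
      exact abs_le.mpr ⟨hs.1.le, hs.2⟩
    rw [Real.norm_eq_abs, abs_of_nonneg (by positivity)]
    exact Real.rpow_le_rpow (abs_nonneg _) (hδ s hs1) hp.le
  case lim =>
    refine Eventually.of_forall fun s _ => ?_
    exact ((hg.tendsto_slope_comp_mul_const s).mono_left (nhdsGT_le_nhdsNE 0)).abs.rpow_const
      (Or.inr hp.le)

theorem tendsto_rpow_neg_mul_integral_abs_sub_div_rpow (hgc : Continuous g)
    (hg : HasDerivAt g c 0) (hp : 0 < p) :
    Tendsto (fun δ => δ ^ (-(1 / p)) * (∫ t in (-δ)..δ, |(g t - g 0) / δ| ^ p) ^ (1 / p))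
      (𝓝[>] 0) (𝓝 ((2 / (p + 1)) ^ (1 / p) * |c|)) := by
  have hval : (|c| ^ p * (2 / (p + 1))) ^ (1 / p) = (2 / (p + 1)) ^ (1 / p) * |c| := by
    rw [Real.mul_rpow (by positivity) (by positivity), ← Real.rpow_mul (abs_nonneg c),
      mul_one_div_cancel hp.ne', Real.rpow_one, mul_comm]
  rw [← hval]
  refine ((tendsto_integral_abs_sub_div_rpow hgc hg hp).rpow_const
    (Or.inr (by positivity))).congr' ?_
  filter_upwards [self_mem_nhdsWithin] with δ hδ
  exact (rpow_neg_mul_integral_rpow_eq (f := fun t => |(g t - g 0) / δ| ^ p)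
    (fun t => by positivity) hδ _).symm

end DifferenceQuotient

/-- For `L` continuous and Fréchet differentiable at `θ`, the directional δ-Lᵖ quantity
along a fixed direction `v` tends, as `δ → 0⁺`, to `(2/(p+1))^{1/p} · |⟨∇L(θ), v⟩|`. -/
theorem directional_Lp_limit {E : Type*} [NormedAddCommGroup E] [InnerProductSpace ℝ E]
    [FiniteDimensional ℝ E] (L : E → ℝ) (hL : Continuous L) (θ : E)
    (hdiff : DifferentiableAt ℝ L θ) (v : E) (p : ℝ) (hp : 1 ≤ p) :
    Tendsto
      (fun δ : ℝ => δ ^ (-(1 / p)) *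
        (∫ t in (-δ)..δ, |(L (θ + t • v) - L θ) / δ| ^ p) ^ (1 / p))
      (nhdsWithin 0 (Set.Ioi 0))
      (nhds ((2 / (p + 1)) ^ (1 / p) * |⟪gradient L θ, v⟫|)) := by
  have hline : HasDerivAt (fun t : ℝ => L (θ + t • v)) ⟪gradient L θ, v⟫ 0 := by
    have h := hdiff.hasFDerivAt.hasLineDerivAt v
    rwa [← toDual_gradient, InnerProductSpace.toDual_apply_apply] at h
  have hline_cont : Continuous fun t : ℝ => L (θ + t • v) := by fun_prop
  simpa only [zero_smul, add_zero] using
    tendsto_rpow_neg_mul_integral_abs_sub_div_rpow hline_cont hline (by linarith)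
end

section
/- Let L : E → ℝ be continuously differentiable, p ≥ 1 a real number, and λ > 0. Then for every θ ∈ E the limit R(θ) := lim_{δ→0⁺} (‖L‖_p^{δ,θ})^p exists and equals (2/(p+1)) · sup_{v ∈ φ(θ)} |⟨∇L(θ), v⟩|^p; moreover, if θ* is a global minimizer of L, then θ* is also a global minimizer of the regularized objective θ ↦ L(θ) + λ·R(θ). -/
/-!
Differentiability of `L` at `θ` gives `L (θ + t • v) - L θ = t * ⟪∇L θ, v⟫ + o(t)` uniformly
for `v` in the bounded set `φ(θ)`. The normalised quantity
`δ^{-1/p} (∫_{-δ}^{δ} |f t / δ|^p)^{1/p}` is monotone in `|f|` and equals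
`(2/(p+1))^{1/p} * c` for `f t = c * |t|`, whatever `δ`; squeezing `f` between two such profiles
shows that the sharpness tends to `(2/(p+1))^{1/p} * sup_v |⟪∇L θ, v⟫|`. Since `φ(θ)` is compact
this supremum is a maximum, so it commutes with `x ↦ x^p`. At a global minimiser `∇L = 0`, so the
nonnegative regulariser vanishes there.
-/

open MeasureTheory Filter Set RealInnerProductSpace

noncomputable section

variable {N₁ : ℕ} {n : Fin N₁ → ℕ} {F : Type*} [NormedAddCommGroup F]
  [InnerProductSpace ℝ F] [FiniteDimensional ℝ F]

theorem csSup_image_le_csSup_image_add {α : Type*} {S : Set α} {f g : α → ℝ} {ε : ℝ}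
    (hS : S.Nonempty) (hg : BddAbove (g '' S)) (h : ∀ x ∈ S, f x ≤ g x + ε) :
    sSup (f '' S) ≤ sSup (g '' S) + ε :=
  csSup_le (hS.image f) <| forall_mem_image.2 fun x hx =>
    (h x hx).trans (by gcongr; exact le_csSup hg (mem_image_of_mem g hx))

theorem abs_csSup_image_sub_csSup_image_le {α : Type*} {S : Set α} {f g : α → ℝ} {ε : ℝ}
    (hS : S.Nonempty) (hg : BddAbove (g '' S)) (h : ∀ x ∈ S, |f x - g x| ≤ ε) :
    |sSup (f '' S) - sSup (g '' S)| ≤ ε := by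
  have hfg : ∀ x ∈ S, f x ≤ g x + ε := fun x hx => by linarith [(abs_le.1 (h x hx)).2]
  have hf : BddAbove (f '' S) := ⟨sSup (g '' S) + ε, forall_mem_image.2 fun x hx =>
    (hfg x hx).trans (by gcongr; exact le_csSup hg (mem_image_of_mem g hx))⟩
  rw [abs_sub_le_iff]
  constructor
  · linarith [csSup_image_le_csSup_image_add hS hg hfg]
  · linarith [csSup_image_le_csSup_image_add hS hf fun x hx => show g x ≤ f x + ε by
      linarith [(abs_le.1 (h x hx)).1]]

theorem IsMaxOn.csSup_image_eq {α β : Type*} [ConditionallyCompleteLattice β] {S : Set α}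
    {f : α → β} {x : α} (hx : x ∈ S)
    (h : IsMaxOn f S x) : sSup (f '' S) = f x :=
  IsGreatest.csSup_eq ⟨mem_image_of_mem f hx, forall_mem_image.2 h⟩

section QuotientLpNorm

variable {p δ : ℝ}

theorem integral_abs_rpow (hp : 0 ≤ p) (hδ : 0 ≤ δ) :
    ∫ t in (-δ)..δ, |t| ^ p = 2 * δ ^ (p + 1) / (p + 1) := by
  have hint : ∀ a b : ℝ, IntervalIntegrable (fun t : ℝ => |t| ^ p) volume a b := fun a b =>
    (continuous_abs.rpow_const fun _ => Or.inr hp).intervalIntegrable a b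
  have hpos : ∫ t in (0 : ℝ)..δ, |t| ^ p = δ ^ (p + 1) / (p + 1) := by
    rw [intervalIntegral.integral_congr (g := fun t => t ^ p) fun t ht => by
        rw [uIcc_of_le hδ] at ht; simp only [abs_of_nonneg ht.1],
      integral_rpow (Or.inl (by linarith)), Real.zero_rpow (by linarith), sub_zero]
  have hneg : ∫ t in (-δ)..0, |t| ^ p = δ ^ (p + 1) / (p + 1) := by
    have h := intervalIntegral.integral_comp_neg (a := 0) (b := δ) fun t => |t| ^ p
    simp only [abs_neg, neg_zero] at h
    rw [← h, hpos]
  rw [← intervalIntegral.integral_add_adjacent_intervals (hint (-δ) 0) (hint 0 δ), hpos, hneg]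
  ring

/-- `bnSharpness L p δ θ` is, by definition, the supremum of
`quotientLpNorm p δ (fun t => L (θ + t • v) - L θ)` over `v ∈ phi θ`. -/
def quotientLpNorm (p δ : ℝ) (f : ℝ → ℝ) : ℝ :=
  δ ^ (-(1 / p)) * (∫ t in (-δ)..δ, |f t / δ| ^ p) ^ (1 / p)

theorem quotientLpNorm_const_mul_abs (hp : 0 < p) (hδ : 0 < δ) {c : ℝ} (hc : 0 ≤ c) :
    quotientLpNorm p δ (fun t => c * |t|) = (2 / (p + 1)) ^ (1 / p) * c := by
  have hδp : δ ^ (p + 1) = δ ^ p * δ := by rw [Real.rpow_add hδ, Real.rpow_one]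
  have hint : ∫ t in (-δ)..δ, |c * |t| / δ| ^ p = 2 / (p + 1) * c ^ p * δ := by
    simp_rw [abs_div, abs_mul, abs_abs, abs_of_nonneg hc, abs_of_pos hδ, mul_div_right_comm,
      Real.mul_rpow (div_nonneg hc hδ.le) (abs_nonneg _)]
    rw [intervalIntegral.integral_const_mul, integral_abs_rpow hp.le hδ.le,
      Real.div_rpow hc hδ.le, hδp]
    field_simp
  have hroot : ∀ {x : ℝ}, 0 ≤ x → (x ^ p) ^ (1 / p) = x := fun hx => by
    rw [← Real.rpow_mul hx, mul_one_div_cancel hp.ne', Real.rpow_one]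
  unfold quotientLpNorm
  rw [hint, Real.mul_rpow (by positivity) hδ.le, Real.mul_rpow (by positivity) (by positivity),
    hroot hc, Real.rpow_neg hδ.le]
  field_simp

theorem quotientLpNorm_mono (hp : 0 ≤ p) (hδ : 0 ≤ δ) {f g : ℝ → ℝ} (hf : Continuous f)
    (hg : Continuous g) (h : ∀ t ∈ Icc (-δ) δ, |f t| ≤ |g t|) :
    quotientLpNorm p δ f ≤ quotientLpNorm p δ g := by
  have hcont : ∀ {u : ℝ → ℝ}, Continuous u → Continuous fun t => |u t / δ| ^ p := fun hu =>
    (hu.div_const δ).abs.rpow_const fun _ => Or.inr hp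
  unfold quotientLpNorm
  gcongr
  · exact intervalIntegral.integral_nonneg (by linarith) fun _ _ => by positivity
  · refine intervalIntegral.integral_mono_on (by linarith) ((hcont hf).intervalIntegrable _ _)
      ((hcont hg).intervalIntegrable _ _) fun t ht => ?_
    rw [abs_div, abs_div]
    exact Real.rpow_le_rpow (by positivity) (div_le_div_of_nonneg_right (h t ht) (abs_nonneg _)) hp

theorem abs_quotientLpNorm_sub_le (hp : 0 < p) (hδ : 0 < δ) {f : ℝ → ℝ} (hf : Continuous f)
    {a ε : ℝ} (h : ∀ t ∈ Icc (-δ) δ, |f t - t * a| ≤ ε * |t|) :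
    |quotientLpNorm p δ f - ((2 / (p + 1)) ^ (1 / p) * |a|)| ≤ (2 / (p + 1)) ^ (1 / p) * ε := by
  set K := (2 / (p + 1)) ^ (1 / p)
  have hK : 0 ≤ K := by positivity
  have hε : 0 ≤ ε := by
    have hδε := (abs_nonneg _).trans (h δ ⟨by linarith, le_rfl⟩)
    exact nonneg_of_mul_nonneg_left hδε (abs_pos.2 hδ.ne')
  have hcont : ∀ c : ℝ, Continuous fun t => c * |t| := fun c => by fun_prop
  have hupper : quotientLpNorm p δ f ≤ K * (|a| + ε) := by
    rw [← quotientLpNorm_const_mul_abs hp hδ (by positivity)]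
    refine quotientLpNorm_mono hp.le hδ.le hf (hcont _) fun t ht => ?_
    rw [abs_of_nonneg (a := (|a| + ε) * |t|) (by positivity)]
    have := abs_sub_abs_le_abs_sub (f t) (t * a)
    linarith [h t ht, abs_mul t a]
  have hlower : K * max 0 (|a| - ε) ≤ quotientLpNorm p δ f := by
    rw [← quotientLpNorm_const_mul_abs hp hδ (le_max_left _ _)]
    refine quotientLpNorm_mono hp.le hδ.le (hcont _) hf fun t ht => ?_
    rw [abs_of_nonneg (a := max 0 (|a| - ε) * |t|) (by positivity),
      max_mul_of_nonneg _ _ (abs_nonneg t), zero_mul]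
    have := abs_sub_abs_le_abs_sub (t * a) (f t)
    refine max_le (abs_nonneg _) ?_
    linarith [h t ht, abs_mul t a, abs_sub_comm (t * a) (f t)]
  have : K * (|a| - ε) ≤ K * max 0 (|a| - ε) := by gcongr; exact le_max_right _ _
  rw [abs_sub_le_iff]
  constructor <;> linarith

end QuotientLpNorm

open Topology

section Directional

variable {E : Type*} [NormedAddCommGroup E] [InnerProductSpace ℝ E] [CompleteSpace E]

theorem HasGradientAt.eventually_abs_sub_inner_le {L : E → ℝ} {g θ : E}
    (hL : HasGradientAt L g θ) {R ε : ℝ} (hR : 0 < R) (hε : 0 < ε) :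
    ∀ᶠ δ in 𝓝 (0 : ℝ), ∀ v : E, ‖v‖ ≤ R → ∀ t ∈ Icc (-δ) δ,
      |L (θ + t • v) - L θ - t * ⟪g, v⟫| ≤ ε * |t| := by
  obtain ⟨r, hr, hsmall⟩ := Metric.eventually_nhds_iff.1
    ((hasGradientAt_iff_isLittleO_nhds_zero.1 hL).def (div_pos hε hR))
  filter_upwards [Metric.ball_mem_nhds (0 : ℝ) (div_pos hr hR)] with δ hδ v hv t ht
  have htv : ‖t • v‖ ≤ |t| * R := by
    rw [norm_smul, Real.norm_eq_abs]; gcongr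
  have hδR : δ * R < r := by
    rw [Metric.mem_ball, Real.dist_0_eq_abs, lt_div_iff₀ hR] at hδ
    exact (mul_le_mul_of_nonneg_right (le_abs_self δ) hR.le).trans_lt hδ
  have hsmall := hsmall (y := t • v) (by
    rw [dist_zero_right]
    exact htv.trans_lt ((mul_le_mul_of_nonneg_right (abs_le.2 ht) hR.le).trans_lt hδR))
  rw [inner_smul_right, Real.norm_eq_abs] at hsmall
  calc _ ≤ ε / R * ‖t • v‖ := hsmall
    _ ≤ ε / R * (|t| * R) := by gcongr
    _ = ε * |t| := by field_simp

theorem tendsto_sSup_quotientLpNorm {L : E → ℝ} {g θ : E} (hLc : Continuous L)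
    (hL : HasGradientAt L g θ) {S : Set E} (hS : S.Nonempty) (hSb : Bornology.IsBounded S)
    {p : ℝ} (hp : 0 < p) :
    Tendsto (fun δ => sSup ((fun v => quotientLpNorm p δ fun t => L (θ + t • v) - L θ) '' S))
      (𝓝[>] 0) (𝓝 (sSup ((fun v => (2 / (p + 1)) ^ (1 / p) * |⟪g, v⟫|) '' S))) := by
  set K := (2 / (p + 1)) ^ (1 / p)
  have hK : 0 < K := by positivity
  obtain ⟨R, hR, hSR⟩ := hSb.subset_closedBall_lt 0 0
  have hnorm : ∀ v ∈ S, ‖v‖ ≤ R := fun v hv => by simpa using hSR hv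
  have hbdd : BddAbove ((fun v => K * |⟪g, v⟫|) '' S) :=
    ⟨K * (‖g‖ * R), forall_mem_image.2 fun v hv => by
      gcongr; exact (abs_real_inner_le_norm g v).trans (by gcongr; exact hnorm v hv)⟩
  rw [Metric.tendsto_nhds]
  intro ε hε
  filter_upwards [self_mem_nhdsWithin, nhdsWithin_le_nhds
    (hL.eventually_abs_sub_inner_le hR (div_pos hε (mul_pos two_pos hK)))] with δ hδ hest
  refine (abs_csSup_image_sub_csSup_image_le hS hbdd fun v hv =>
    abs_quotientLpNorm_sub_le hp hδ (by fun_prop) (hest v (hnorm v hv))).trans_lt ?_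
  calc K * (ε / (2 * K)) = ε / 2 := by field_simp
    _ < ε := half_lt_self hε

end Directional

omit [InnerProductSpace ℝ F] [FiniteDimensional ℝ F] in
theorem norm_of_mem_phi {θ v : BNSpace n F} (hv : v ∈ phi θ) :
    ‖v‖ = Real.sqrt (‖θ.ofLp.1‖ ^ 2 + 1) := by
  have h1 : ‖v.ofLp.1‖ ^ 2 = ‖θ.ofLp.1‖ ^ 2 := by
    simp only [PiLp.norm_sq_eq_of_L2, hv.1]
  rw [← Real.sqrt_sq (norm_nonneg v), WithLp.prod_norm_sq_eq_of_L2]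
  change √(‖v.ofLp.1‖ ^ 2 + ‖v.ofLp.2‖ ^ 2) = _
  rw [h1, hv.2, one_pow]

theorem isCompact_phi (θ : BNSpace n F) : IsCompact (phi θ) := by
  have hcont : Continuous fun v : BNSpace n F => v.ofLp := WithLp.prod_continuous_ofLp ..
  refine Metric.isCompact_of_isClosed_isBounded ?_ ?_
  · simp only [phi, ofPred_and, ofPred_forall]
    exact (isClosed_iInter fun i => isClosed_eq ((continuous_apply i).comp
      ((PiLp.continuous_ofLp 2 _).comp (continuous_fst.comp hcont))).norm continuous_const).inter
      (isClosed_eq (continuous_snd.comp hcont).norm continuous_const)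
  · exact isBounded_iff_forall_norm_le.2 ⟨_, fun v hv => (norm_of_mem_phi hv).le⟩

/-- The regulariser `R(θ)`, in closed form. -/
def bnRegularizer (L : BNSpace n F → ℝ) (p : ℝ) (θ : BNSpace n F) : ℝ :=
  2 / (p + 1) * sSup ((fun v => |⟪gradient L θ, v⟫| ^ p) '' phi θ)

theorem tendsto_bnSharpness_rpow {L : BNSpace n F → ℝ} (hL : ContDiff ℝ 1 L) {p : ℝ}
    (hp : 0 < p) (θ : BNSpace n F) :
    Tendsto (fun δ => bnSharpness L p δ θ ^ p) (𝓝[>] 0) (𝓝 (bnRegularizer L p θ)) := by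
  rcases (phi θ).eq_empty_or_nonempty with hempty | hne
  · -- `phi θ = ∅` when `F` is trivial; then both sides are `sSup ∅ = 0`.
    simp only [bnSharpness, bnRegularizer, hempty, image_empty, Real.sSup_empty, mul_zero,
      Real.zero_rpow hp.ne']
    exact tendsto_const_nhds
  set g := gradient L θ
  obtain ⟨v₀, hv₀, hmax⟩ := (isCompact_phi θ).exists_isMaxOn hne
    (continuous_const.inner continuous_id).abs.continuousOn (f := fun v => |⟪g, v⟫|)
  set K := (2 / (p + 1)) ^ (1 / p)
  have hsup : sSup ((fun v => K * |⟪g, v⟫|) '' phi θ) = K * |⟪g, v₀⟫| :=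
    IsMaxOn.csSup_image_eq hv₀ fun v hv =>
      mul_le_mul_of_nonneg_left (hmax hv) (by positivity : 0 ≤ K)
  have hsup_rpow : sSup ((fun v => |⟪g, v⟫| ^ p) '' phi θ) = |⟪g, v₀⟫| ^ p :=
    IsMaxOn.csSup_image_eq hv₀ fun v hv => Real.rpow_le_rpow (abs_nonneg _) (hmax hv) hp.le
  have hlim := (tendsto_sSup_quotientLpNorm hL.continuous
    (hL.differentiable one_ne_zero θ).hasGradientAt hne (isCompact_phi θ).isBounded hp).rpow_const
    (Or.inr hp.le) (p := p)
  rwa [hsup, Real.mul_rpow (by positivity) (abs_nonneg _), ← Real.rpow_mul (by positivity),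
    one_div_mul_cancel hp.ne', Real.rpow_one, ← hsup_rpow] at hlim

theorem bnRegularizer_nonneg (L : BNSpace n F → ℝ) {p : ℝ} (hp : 0 < p) (θ : BNSpace n F) :
    0 ≤ bnRegularizer L p θ :=
  mul_nonneg (by positivity) (Real.sSup_nonneg fun _ ⟨_, _, hx⟩ => hx ▸ by positivity)

theorem bnRegularizer_eq_zero_of_isLocalMin {L : BNSpace n F → ℝ} {θ : BNSpace n F}
    (h : IsLocalMin L θ) {p : ℝ} (hp : 0 < p) : bnRegularizer L p θ = 0 := by
  have hgrad : gradient L θ = 0 := by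
    rw [gradient, h.fderiv_eq_zero, map_zero]
  refine le_antisymm ?_ (bnRegularizer_nonneg L hp θ)
  refine mul_nonpos_of_nonneg_of_nonpos (by positivity) (Real.sSup_nonpos fun _ ⟨_, _, hx⟩ => ?_)
  simp only [← hx, hgrad, inner_zero_left, abs_zero, Real.zero_rpow hp.ne', le_refl]

/-- For continuously differentiable `L`, the limit
`R(θ) = lim_{δ→0⁺} (‖L‖_p^{δ,θ})^p` exists and equals
`(2/(p+1)) · sup_{v ∈ φ(θ)} |⟨∇L(θ), v⟩|^p`; moreover any global minimizer of `L` is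
also a global minimizer of `θ ↦ L(θ) + λ·R(θ)`. -/
theorem bnSharpness_regularizer_limit_and_min (L : BNSpace n F → ℝ) (hL : ContDiff ℝ 1 L)
    (p lam : ℝ) (hp : 1 ≤ p) (hlam : 0 < lam) :
    (∀ θ : BNSpace n F,
      Tendsto (fun δ : ℝ => bnSharpness L p δ θ ^ p) (nhdsWithin 0 (Set.Ioi 0))
        (nhds ((2 / (p + 1)) *
          sSup ((fun v => |⟪gradient L θ, v⟫| ^ p) '' phi θ)))) ∧
    (∀ θs : BNSpace n F, (∀ θ, L θs ≤ L θ) →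
      ∀ θ : BNSpace n F,
        L θs + lam * ((2 / (p + 1)) * sSup ((fun v => |⟪gradient L θs, v⟫| ^ p) '' phi θs)) ≤
        L θ + lam * ((2 / (p + 1)) * sSup ((fun v => |⟪gradient L θ, v⟫| ^ p) '' phi θ))) := by
  have hp0 : 0 < p := by linarith
  refine ⟨tendsto_bnSharpness_rpow hL hp0, fun θs hmin θ => ?_⟩
  change L θs + lam * bnRegularizer L p θs ≤ L θ + lam * bnRegularizer L p θ
  rw [bnRegularizer_eq_zero_of_isLocalMin (.of_forall hmin) hp0, mul_zero, add_zero]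
  linarith [hmin θ, mul_nonneg hlam.le (bnRegularizer_nonneg L hp0 θ)]
end
end

section
/- Trace sharpness is not scale invariant: there exist a dimension n ≥ 2, a twice continuously differentiable function L : EuclideanSpace ℝ n → ℝ defined on {x : x ≠ 0} satisfying L(c • x) = L(x) for every c > 0 and every x ≠ 0, together with a point θ ≠ 0 and a scalar c > 0, c ≠ 1, such that the trace of the Hessian of L at c • θ differs from the trace of the Hessian of L at θ. -/
/-! A scale-invariant function is homogeneous of degree `0`, so its gradient is homogeneous of
degree `-1` and its Hessian of degree `-2`: `H (c • x) = c⁻² • H x`. Hence trace sharpness is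
multiplied by `c⁻²` under scaling, and changes as soon as it is nonzero somewhere. For
`L x = x₀² / ‖x‖²` on `ℝ²`, the radial second derivative at `e₀` vanishes, while along
`e₀ + t • e₁` we have `L = 1 / (1 + t²)`, whose second derivative at `0` is `-2`. -/

open Filter Topology

section ScaleInvariant

variable {E F : Type*} [NormedAddCommGroup E] [NormedSpace ℝ E]
  [NormedAddCommGroup F] [NormedSpace ℝ F]

theorem fderiv_smul_eq_of_eventuallyEq {f : E → F} {a c : ℝ} {x : E} (hc : c ≠ 0)
    (h : (fun y => f (c • y)) =ᶠ[𝓝 x] a • f) :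
    fderiv ℝ f (c • x) = (a / c) • fderiv ℝ f x := by
  have key : c • fderiv ℝ f (c • x) = a • fderiv ℝ f x := by
    rw [← fderiv_comp_smul, h.fderiv_eq, fderiv_const_smul_field, Pi.smul_apply]
  rw [div_eq_inv_mul, mul_smul, ← key, inv_smul_smul₀ hc]

def ScaleInvariant (L : E → F) : Prop :=
  ∀ c : ℝ, 0 < c → ∀ x : E, x ≠ 0 → L (c • x) = L x

variable {L : E → F}

theorem fderiv_smul_of_scale_invariant
    (hL : ScaleInvariant L) {c : ℝ} (hc : 0 < c) {x : E} (hx : x ≠ 0) :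
    fderiv ℝ L (c • x) = c⁻¹ • fderiv ℝ L x := by
  rw [inv_eq_one_div, fderiv_smul_eq_of_eventuallyEq hc.ne']
  filter_upwards [eventually_ne_nhds hx] with y hy
  simp [hL c hc y hy]

theorem fderiv_fderiv_smul_of_scale_invariant
    (hL : ScaleInvariant L) {c : ℝ} (hc : 0 < c) {x : E} (hx : x ≠ 0) :
    fderiv ℝ (fderiv ℝ L) (c • x) = (c ^ 2)⁻¹ • fderiv ℝ (fderiv ℝ L) x := by
  rw [fderiv_smul_eq_of_eventuallyEq (a := c⁻¹) hc.ne']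
  · congr 1
    ring
  · filter_upwards [eventually_ne_nhds hx] with y hy
    exact fderiv_smul_of_scale_invariant hL hc hy

theorem sum_fderiv_fderiv_smul_of_scale_invariant {ι : Type*} [Fintype ι]
    (hL : ScaleInvariant L) {c : ℝ} (hc : 0 < c) {x : E} (hx : x ≠ 0) (b : ι → E) :
    ∑ i, fderiv ℝ (fderiv ℝ L) (c • x) (b i) (b i) =
      (c ^ 2)⁻¹ • ∑ i, fderiv ℝ (fderiv ℝ L) x (b i) (b i) := by
  simp [fderiv_fderiv_smul_of_scale_invariant hL hc hx, Finset.smul_sum]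

theorem ContDiffAt.fderiv_fderiv_apply_eq_deriv_deriv {f : E → F} {x : E}
    (hf : ContDiffAt ℝ 2 f x) (v : E) :
    fderiv ℝ (fderiv ℝ f) x v v = deriv (deriv fun t : ℝ => f (x + t • v)) 0 := by
  have hline (t : ℝ) : HasDerivAt (fun s : ℝ => x + s • v) v t := by
    simpa using ((hasDerivAt_id t).smul_const v).const_add x
  have hline_cont : Tendsto (fun t : ℝ => x + t • v) (𝓝 0) (𝓝 x) := by
    simpa using (hline 0).continuousAt.tendsto
  have hderiv : deriv (fun t : ℝ => f (x + t • v)) =ᶠ[𝓝 0]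
      fun t => fderiv ℝ f (x + t • v) v := by
    filter_upwards [hline_cont.eventually (hf.eventually (by simp))] with t ht
    exact ((ht.differentiableAt two_ne_zero).hasFDerivAt.comp_hasDerivAt t (hline t)).deriv
  have hf' : DifferentiableAt ℝ (fderiv ℝ f) x :=
    (hf.fderiv_right (m := 1) le_rfl).differentiableAt one_ne_zero
  have hcomp := hf'.hasFDerivAt.comp_hasDerivAt_of_eq (0 : ℝ) (hline 0) (by simp)
  rw [hderiv.deriv_eq]
  exact ((hcomp.clm_apply (hasDerivAt_const (0 : ℝ) v)).deriv.trans (by simp)).symm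

theorem fderiv_fderiv_apply_self_of_scale_invariant
    (hL : ScaleInvariant L) {x : E} (hLx : ContDiffAt ℝ 2 L x) (hx : x ≠ 0) :
    fderiv ℝ (fderiv ℝ L) x x x = 0 := by
  have hconst : (fun t : ℝ => L (x + t • x)) =ᶠ[𝓝 0] fun _ => L x := by
    filter_upwards [eventually_gt_nhds (show (-1 : ℝ) < 0 by norm_num)] with t ht
    rw [show x + t • x = (1 + t) • x by rw [add_smul, one_smul], hL _ (by linarith) x hx]
  rw [hLx.fderiv_fderiv_apply_eq_deriv_deriv, hconst.deriv.deriv_eq]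
  simp

end ScaleInvariant

noncomputable def cosSqArg (x : EuclideanSpace ℝ (Fin 2)) : ℝ := x 0 ^ 2 / ‖x‖ ^ 2

theorem cosSqArg_smul {c : ℝ} (hc : 0 < c) (x : EuclideanSpace ℝ (Fin 2)) :
    cosSqArg (c • x) = cosSqArg x := by
  simp only [cosSqArg, PiLp.smul_apply, smul_eq_mul, norm_smul, Real.norm_eq_abs, mul_pow, sq_abs]
  exact mul_div_mul_left _ _ (by positivity)

theorem scaleInvariant_cosSqArg : ScaleInvariant cosSqArg :=
  fun _ hc x _ => cosSqArg_smul hc x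

theorem contDiffOn_cosSqArg : ContDiffOn ℝ 2 cosSqArg {x | x ≠ 0} := by
  refine ContDiffOn.div (by fun_prop) (contDiff_norm_sq ℝ).contDiffOn fun x hx => ?_
  simpa using hx

theorem cosSqArg_single_zero_add_smul_single_one (t : ℝ) :
    cosSqArg (EuclideanSpace.single 0 1 + t • EuclideanSpace.single 1 1) = (1 + t ^ 2)⁻¹ := by
  simp [cosSqArg, EuclideanSpace.norm_sq_eq, Fin.sum_univ_two]

theorem deriv_deriv_inv_one_add_sq : deriv (deriv fun t : ℝ => (1 + t ^ 2)⁻¹) 0 = -2 := by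
  have hderiv (t : ℝ) :
      HasDerivAt (fun t : ℝ => (1 + t ^ 2)⁻¹) (-(2 * t) / (1 + t ^ 2) ^ 2) t :=
    (((hasDerivAt_pow 2 t).const_add 1).inv (by positivity)).congr_deriv (by simp)
  have hderiv' : HasDerivAt (fun t : ℝ => -(2 * t) / (1 + t ^ 2) ^ 2) (-2) 0 :=
    (((hasDerivAt_id (0 : ℝ)).const_mul 2).neg.div
      (((hasDerivAt_pow 2 (0 : ℝ)).const_add 1).pow 2) (by norm_num)).congr_deriv (by norm_num)
  rw [funext fun t => (hderiv t).deriv, hderiv'.deriv]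

theorem contDiffAt_cosSqArg {x : EuclideanSpace ℝ (Fin 2)} (hx : x ≠ 0) :
    ContDiffAt ℝ 2 cosSqArg x :=
  contDiffOn_cosSqArg.contDiffAt (isOpen_ne.mem_nhds hx)

theorem sum_fderiv_fderiv_cosSqArg_single_zero :
    ∑ i, fderiv ℝ (fderiv ℝ cosSqArg) (EuclideanSpace.single 0 1)
      (EuclideanSpace.single i (1 : ℝ)) (EuclideanSpace.single i (1 : ℝ)) = -2 := by
  have hx : (EuclideanSpace.single 0 1 : EuclideanSpace ℝ (Fin 2)) ≠ 0 := by simp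
  rw [Fin.sum_univ_two, fderiv_fderiv_apply_self_of_scale_invariant
      scaleInvariant_cosSqArg (contDiffAt_cosSqArg hx) hx,
    (contDiffAt_cosSqArg hx).fderiv_fderiv_apply_eq_deriv_deriv,
    funext cosSqArg_single_zero_add_smul_single_one, deriv_deriv_inv_one_add_sq, zero_add]

/-- Trace sharpness is not scale invariant: there exist a dimension `n ≥ 2`, a function
`L` on `EuclideanSpace ℝ (Fin n)` that is twice continuously differentiable on
`{x | x ≠ 0}` and scale invariant (`L (c • x) = L x` for `c > 0`, `x ≠ 0`), together
with a point `θ ≠ 0` and a scalar `c > 0`, `c ≠ 1`, such that the trace of the Hessian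
of `L` (computed in the standard orthonormal basis) differs between `c • θ` and `θ`. -/
theorem trace_sharpness_not_scale_invariant :
    ∃ (n : ℕ), 2 ≤ n ∧ ∃ (L : EuclideanSpace ℝ (Fin n) → ℝ),
      ContDiffOn ℝ 2 L {x : EuclideanSpace ℝ (Fin n) | x ≠ 0} ∧
      (∀ c : ℝ, 0 < c → ∀ x : EuclideanSpace ℝ (Fin n), x ≠ 0 → L (c • x) = L x) ∧
      ∃ (θ : EuclideanSpace ℝ (Fin n)), θ ≠ 0 ∧ ∃ (c : ℝ), 0 < c ∧ c ≠ 1 ∧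
        (∑ i, fderiv ℝ (fderiv ℝ L) (c • θ)
            (EuclideanSpace.single i (1 : ℝ)) (EuclideanSpace.single i (1 : ℝ))) ≠
        (∑ i, fderiv ℝ (fderiv ℝ L) θ
            (EuclideanSpace.single i (1 : ℝ)) (EuclideanSpace.single i (1 : ℝ))) := by
  have hθ : (EuclideanSpace.single 0 1 : EuclideanSpace ℝ (Fin 2)) ≠ 0 := by simp
  refine ⟨2, le_rfl, cosSqArg, contDiffOn_cosSqArg, scaleInvariant_cosSqArg, _, hθ, 2, two_pos,
    by norm_num, ?_⟩
  rw [sum_fderiv_fderiv_smul_of_scale_invariant scaleInvariant_cosSqArg two_pos hθ,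
    sum_fderiv_fderiv_cosSqArg_single_zero]
  norm_num
end
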